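/- (Theorem 1, forgetting-data case.) Let a, b ∈ ℝ^d, let W_pre, W_exact be d×C real matrices, and let Û, U* ∈ ℝ^{d×s} have orthonormal columns. Suppose: ‖a − b‖₂ ≤ ε_d; ‖b‖₂ ≤ ε_exact; ‖U*U*ᵀ b‖₂ ≤ ε_fg; ‖U*U*ᵀ − ÛÛᵀ‖_F ≤ ε_opt; ‖W_pre‖₂ ≤ L_pre; and ‖W_exact‖₂ ≤ L_exact. Then ‖W_preᵀ ÛÛᵀ a − W_exactᵀ b‖₂ ≤ L_pre (ε_d + ε_fg + ε_opt ε_exact) + L_exact ε_exact. -/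

import Mathlib

open Matrix

/-- The Euclidean (ℓ²) norm of a vector in `ℝ^n`. -/
noncomputable def eNorm {n : ℕ} (v : Fin n → ℝ) : ℝ := Real.sqrt (∑ i, v i ^ 2)

/-- The Frobenius norm of a real matrix. -/
noncomputable def fNorm {m n : ℕ} (A : Matrix (Fin m) (Fin n) ℝ) : ℝ :=
  Real.sqrt (∑ i, ∑ j, A i j ^ 2)

/-- The spectral (ℓ² operator) norm of a real matrix. -/
noncomputable def sNorm {m n : ℕ} (A : Matrix (Fin m) (Fin n) ℝ) : ℝ :=
  sSup {c : ℝ | ∃ v : Fin n → ℝ, eNorm v ≤ 1 ∧ c = eNorm (A.mulVec v)}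

/- ### Auxiliary lemmas -/

lemma eNorm_nonneg {n : ℕ} (v : Fin n → ℝ) : 0 ≤ eNorm v := Real.sqrt_nonneg _

lemma fNorm_nonneg {m n : ℕ} (A : Matrix (Fin m) (Fin n) ℝ) : 0 ≤ fNorm A :=
  Real.sqrt_nonneg _

lemma eNorm_sq {n : ℕ} (v : Fin n → ℝ) : eNorm v ^ 2 = ∑ i, v i ^ 2 :=
  Real.sq_sqrt (by positivity)

lemma eNorm_sq_eq_dot {n : ℕ} (v : Fin n → ℝ) : eNorm v ^ 2 = v ⬝ᵥ v := by
  rw [eNorm_sq]; simp [dotProduct, sq]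

lemma sq_le_imp {a b : ℝ} (ha : 0 ≤ a) (hb : 0 ≤ b) (h : a ^ 2 ≤ b ^ 2) : a ≤ b := by
  nlinarith

lemma dot_le_eNorm {n : ℕ} (u v : Fin n → ℝ) : u ⬝ᵥ v ≤ eNorm u * eNorm v := by
  simpa [dotProduct, eNorm] using Real.sum_mul_le_sqrt_mul_sqrt Finset.univ u v

lemma eNorm_neg {n : ℕ} (v : Fin n → ℝ) : eNorm (-v) = eNorm v := by
  simp [eNorm]

lemma fNorm_neg {m n : ℕ} (A : Matrix (Fin m) (Fin n) ℝ) : fNorm (-A) = fNorm A := by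
  simp [fNorm]

lemma eNorm_add_le {n : ℕ} (u v : Fin n → ℝ) : eNorm (u + v) ≤ eNorm u + eNorm v := by
  refine sq_le_imp (eNorm_nonneg _) (add_nonneg (eNorm_nonneg _) (eNorm_nonneg _)) ?_
  have hd := dot_le_eNorm u v
  have h1 : eNorm (u + v) ^ 2 = eNorm u ^ 2 + 2 * (u ⬝ᵥ v) + eNorm v ^ 2 := by
    rw [eNorm_sq_eq_dot, eNorm_sq_eq_dot, eNorm_sq_eq_dot,
      add_dotProduct, dotProduct_add, dotProduct_add, dotProduct_comm v u]
    ring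
  nlinarith [eNorm_nonneg u, eNorm_nonneg v]

lemma eNorm_smul {n : ℕ} (c : ℝ) (v : Fin n → ℝ) : eNorm (c • v) = |c| * eNorm v := by
  rw [eNorm, eNorm]
  have : ∑ i, (c • v) i ^ 2 = c ^ 2 * ∑ i, v i ^ 2 := by
    rw [Finset.mul_sum]
    refine Finset.sum_congr rfl fun i _ => by simp [mul_pow]
  rw [this, Real.sqrt_mul (sq_nonneg c), Real.sqrt_sq_eq_abs]

lemma mulVec_eNorm_le_fNorm {m n : ℕ} (A : Matrix (Fin m) (Fin n) ℝ) (v : Fin n → ℝ) :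
    eNorm (A.mulVec v) ≤ fNorm A * eNorm v := by
  refine sq_le_imp (eNorm_nonneg _) (mul_nonneg (fNorm_nonneg _) (eNorm_nonneg _)) ?_
  rw [mul_pow, eNorm_sq, eNorm_sq, fNorm, Real.sq_sqrt (by positivity)]
  calc ∑ i, (A.mulVec v i) ^ 2
      ≤ ∑ i, ((∑ j, A i j ^ 2) * ∑ j, v j ^ 2) := by
        refine Finset.sum_le_sum fun i _ => ?_
        simpa [Matrix.mulVec, dotProduct] using
          Finset.sum_mul_sq_le_sq_mul_sq Finset.univ (A i) v
    _ = (∑ i, ∑ j, A i j ^ 2) * ∑ j, v j ^ 2 := by rw [← Finset.sum_mul]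

lemma sNorm_bddAbove {m n : ℕ} (A : Matrix (Fin m) (Fin n) ℝ) :
    BddAbove {c : ℝ | ∃ v : Fin n → ℝ, eNorm v ≤ 1 ∧ c = eNorm (A.mulVec v)} := by
  refine ⟨fNorm A, fun c hc => ?_⟩
  obtain ⟨v, hv, rfl⟩ := hc
  calc eNorm (A.mulVec v) ≤ fNorm A * eNorm v := mulVec_eNorm_le_fNorm A v
    _ ≤ fNorm A * 1 := mul_le_mul_of_nonneg_left hv (fNorm_nonneg A)
    _ = fNorm A := mul_one _

lemma sNorm_nonneg {m n : ℕ} (A : Matrix (Fin m) (Fin n) ℝ) : 0 ≤ sNorm A := by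
  have h0 : (0 : ℝ) ∈ {c : ℝ | ∃ v : Fin n → ℝ, eNorm v ≤ 1 ∧ c = eNorm (A.mulVec v)} := by
    refine ⟨0, ?_, ?_⟩ <;> simp [eNorm]
  exact le_csSup (sNorm_bddAbove A) h0

lemma eNorm_eq_zero {n : ℕ} {v : Fin n → ℝ} (h : eNorm v = 0) : v = 0 := by
  have hsum : ∑ i, v i ^ 2 = 0 := by
    have := Real.sqrt_eq_zero (by positivity) |>.mp h
    exact this
  funext i
  have := (Finset.sum_eq_zero_iff_of_nonneg (fun i _ => sq_nonneg (v i))).mp hsum i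
    (Finset.mem_univ i)
  exact pow_eq_zero_iff (by norm_num) |>.mp this

lemma mulVec_eNorm_le_sNorm {m n : ℕ} (A : Matrix (Fin m) (Fin n) ℝ) (v : Fin n → ℝ) :
    eNorm (A.mulVec v) ≤ sNorm A * eNorm v := by
  rcases eq_or_lt_of_le (eNorm_nonneg v) with h0 | hpos
  · have hv : v = 0 := eNorm_eq_zero h0.symm
    simp [hv, eNorm, ← h0]
  · set c := eNorm v with hc
    have hmem : eNorm (A.mulVec (c⁻¹ • v)) ∈
        {x : ℝ | ∃ w : Fin n → ℝ, eNorm w ≤ 1 ∧ x = eNorm (A.mulVec w)} := by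
      refine ⟨c⁻¹ • v, ?_, rfl⟩
      rw [eNorm_smul, abs_of_pos (inv_pos.mpr hpos), ← hc, inv_mul_cancel₀ (ne_of_gt hpos)]
    have hle : eNorm (A.mulVec (c⁻¹ • v)) ≤ sNorm A := le_csSup (sNorm_bddAbove A) hmem
    rw [Matrix.mulVec_smul, eNorm_smul, abs_of_pos (inv_pos.mpr hpos)] at hle
    calc eNorm (A.mulVec v) = c * (c⁻¹ * eNorm (A.mulVec v)) := by
          field_simp
      _ ≤ c * sNorm A := mul_le_mul_of_nonneg_left hle (le_of_lt hpos)
      _ = sNorm A * c := mul_comm _ _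

lemma transpose_mulVec_eNorm_le {m n : ℕ} (A : Matrix (Fin m) (Fin n) ℝ) (v : Fin m → ℝ) :
    eNorm (Aᵀ.mulVec v) ≤ sNorm A * eNorm v := by
  set w := Aᵀ.mulVec v with hw
  have key : w ⬝ᵥ w = v ⬝ᵥ A.mulVec w := by
    rw [Matrix.dotProduct_mulVec v A w, hw, Matrix.mulVec_transpose]
  have h1 : eNorm w ^ 2 ≤ eNorm v * (sNorm A * eNorm w) := by
    rw [eNorm_sq_eq_dot, key]
    calc v ⬝ᵥ A.mulVec w ≤ eNorm v * eNorm (A.mulVec w) := dot_le_eNorm _ _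
      _ ≤ eNorm v * (sNorm A * eNorm w) :=
        mul_le_mul_of_nonneg_left (mulVec_eNorm_le_sNorm A w) (eNorm_nonneg v)
  rcases eq_or_lt_of_le (eNorm_nonneg w) with h0 | hpos
  · rw [← h0]
    exact mul_nonneg (sNorm_nonneg A) (eNorm_nonneg v)
  · nlinarith [eNorm_nonneg v, sNorm_nonneg A]

lemma proj_contract {d s : ℕ} (U : Matrix (Fin d) (Fin s) ℝ) (hU : Uᵀ * U = 1)
    (x : Fin d → ℝ) : eNorm ((U * Uᵀ).mulVec x) ≤ eNorm x := by
  set y := Uᵀ.mulVec x with hy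
  have hPx : (U * Uᵀ).mulVec x = U.mulVec y := by
    rw [hy, Matrix.mulVec_mulVec]
  have hUy : eNorm (U.mulVec y) = eNorm y := by
    have : (U.mulVec y) ⬝ᵥ (U.mulVec y) = y ⬝ᵥ y := by
      rw [Matrix.dotProduct_mulVec, ← Matrix.mulVec_transpose,
        Matrix.mulVec_mulVec, hU, Matrix.one_mulVec]
    have h2 : eNorm (U.mulVec y) ^ 2 = eNorm y ^ 2 := by
      rw [eNorm_sq_eq_dot, eNorm_sq_eq_dot, this]
    nlinarith [eNorm_nonneg (U.mulVec y), eNorm_nonneg y]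
  have hyx : eNorm y ≤ eNorm x := by
    have key : y ⬝ᵥ y = x ⬝ᵥ U.mulVec y := by
      rw [Matrix.dotProduct_mulVec x U y, hy, Matrix.mulVec_transpose]
    have h1 : eNorm y ^ 2 ≤ eNorm x * eNorm y := by
      rw [eNorm_sq_eq_dot, key]
      calc x ⬝ᵥ U.mulVec y ≤ eNorm x * eNorm (U.mulVec y) := dot_le_eNorm _ _
        _ = eNorm x * eNorm y := by rw [hUy]
    rcases eq_or_lt_of_le (eNorm_nonneg y) with h0 | hpos
    · rw [← h0]; exact eNorm_nonneg x
    · nlinarith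
  rw [hPx, hUy]
  exact hyx

/-- Theorem 1, forgetting-data case: with `a = g_pre(x)`, `b = g_exact(x)`, if
`‖a − b‖₂ ≤ ε_d`, `‖b‖₂ ≤ ε_exact`, `‖U*U*ᵀ b‖₂ ≤ ε_fg`,
`‖U*U*ᵀ − ÛÛᵀ‖_F ≤ ε_opt`, `‖W_pre‖₂ ≤ L_pre` and `‖W_exact‖₂ ≤ L_exact`, then
`‖W_preᵀ ÛÛᵀ a − W_exactᵀ b‖₂ ≤ L_pre (ε_d + ε_fg + ε_opt ε_exact) + L_exact ε_exact`. -/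
theorem unlearned_output_gap_forgetting_case
    {d s C : ℕ}
    (a b : Fin d → ℝ)
    (Wpre Wexact : Matrix (Fin d) (Fin C) ℝ)
    (Uhat Ustar : Matrix (Fin d) (Fin s) ℝ)
    (hUhat : Uhatᵀ * Uhat = 1) (hUstar : Ustarᵀ * Ustar = 1)
    (εd εexact εfg εopt Lpre Lexact : ℝ)
    (hεd : 0 ≤ εd) (hεexact : 0 ≤ εexact) (hεfg : 0 ≤ εfg)
    (hεopt : 0 ≤ εopt) (hLpre : 0 ≤ Lpre) (hLexact : 0 ≤ Lexact)
    (h1 : eNorm (a - b) ≤ εd)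
    (h2 : eNorm b ≤ εexact)
    (h3 : eNorm ((Ustar * Ustarᵀ).mulVec b) ≤ εfg)
    (h4 : fNorm (Ustar * Ustarᵀ - Uhat * Uhatᵀ) ≤ εopt)
    (h5 : sNorm Wpre ≤ Lpre)
    (h6 : sNorm Wexact ≤ Lexact) :
    eNorm (Wpreᵀ.mulVec ((Uhat * Uhatᵀ).mulVec a) - Wexactᵀ.mulVec b)
      ≤ Lpre * (εd + εfg + εopt * εexact) + Lexact * εexact := by
  set Phat := Uhat * Uhatᵀ with hPhat
  set Pstar := Ustar * Ustarᵀ with hPstar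
  -- decomposition
  have hdecomp :
      Wpreᵀ.mulVec (Phat.mulVec a) - Wexactᵀ.mulVec b
        = Wpreᵀ.mulVec (Phat.mulVec (a - b))
          + (Wpreᵀ.mulVec ((Phat - Pstar).mulVec b)
            + (Wpreᵀ.mulVec (Pstar.mulVec b) + -(Wexactᵀ.mulVec b))) := by
    rw [Matrix.mulVec_sub, Matrix.sub_mulVec, Matrix.mulVec_sub, Matrix.mulVec_sub]
    abel
  rw [hdecomp]
  -- bound each term
  have t1 : eNorm (Wpreᵀ.mulVec (Phat.mulVec (a - b))) ≤ Lpre * εd := by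
    calc eNorm (Wpreᵀ.mulVec (Phat.mulVec (a - b)))
        ≤ sNorm Wpre * eNorm (Phat.mulVec (a - b)) := transpose_mulVec_eNorm_le _ _
      _ ≤ Lpre * εd := by
          have := (proj_contract Uhat hUhat (a - b)).trans h1
          exact mul_le_mul h5 this (eNorm_nonneg _) hLpre
  have t2 : eNorm (Wpreᵀ.mulVec ((Phat - Pstar).mulVec b)) ≤ Lpre * (εopt * εexact) := by
    have hf : eNorm ((Phat - Pstar).mulVec b) ≤ εopt * εexact := by
      have hneg : (Phat - Pstar) = -(Pstar - Phat) := by rw [neg_sub]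
      calc eNorm ((Phat - Pstar).mulVec b)
          ≤ fNorm (Phat - Pstar) * eNorm b := mulVec_eNorm_le_fNorm _ _
        _ = fNorm (Pstar - Phat) * eNorm b := by rw [hneg, fNorm_neg]
        _ ≤ εopt * εexact :=
            mul_le_mul h4 h2 (eNorm_nonneg _) hεopt
    calc eNorm (Wpreᵀ.mulVec ((Phat - Pstar).mulVec b))
        ≤ sNorm Wpre * eNorm ((Phat - Pstar).mulVec b) := transpose_mulVec_eNorm_le _ _
      _ ≤ Lpre * (εopt * εexact) :=
          mul_le_mul h5 hf (eNorm_nonneg _) hLpre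
  have t3 : eNorm (Wpreᵀ.mulVec (Pstar.mulVec b)) ≤ Lpre * εfg := by
    calc eNorm (Wpreᵀ.mulVec (Pstar.mulVec b))
        ≤ sNorm Wpre * eNorm (Pstar.mulVec b) := transpose_mulVec_eNorm_le _ _
      _ ≤ Lpre * εfg := mul_le_mul h5 h3 (eNorm_nonneg _) hLpre
  have t4 : eNorm (-(Wexactᵀ.mulVec b)) ≤ Lexact * εexact := by
    rw [eNorm_neg]
    calc eNorm (Wexactᵀ.mulVec b)
        ≤ sNorm Wexact * eNorm b := transpose_mulVec_eNorm_le _ _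
      _ ≤ Lexact * εexact := mul_le_mul h6 h2 (eNorm_nonneg _) hLexact
  calc eNorm (Wpreᵀ.mulVec (Phat.mulVec (a - b))
          + (Wpreᵀ.mulVec ((Phat - Pstar).mulVec b)
            + (Wpreᵀ.mulVec (Pstar.mulVec b) + -(Wexactᵀ.mulVec b))))
      ≤ eNorm (Wpreᵀ.mulVec (Phat.mulVec (a - b)))
        + (eNorm (Wpreᵀ.mulVec ((Phat - Pstar).mulVec b))
          + (eNorm (Wpreᵀ.mulVec (Pstar.mulVec b)) + eNorm (-(Wexactᵀ.mulVec b)))) := by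
        refine (eNorm_add_le _ _).trans ?_
        refine add_le_add le_rfl ((eNorm_add_le _ _).trans ?_)
        exact add_le_add le_rfl (eNorm_add_le _ _)
    _ ≤ Lpre * εd + (Lpre * (εopt * εexact) + (Lpre * εfg + Lexact * εexact)) := by
        exact add_le_add t1 (add_le_add t2 (add_le_add t3 t4))
    _ = Lpre * (εd + εfg + εopt * εexact) + Lexact * εexact := by ring
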